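/- Let X ⊂ ℝ^d be bounded and Borel, and let M_f be a class of finite measures on X admitting Lebesgue densities λ : X → (0, ∞). Fix c > 0 and define, for Λ ∈ M_f with density λ, total mass |Λ| = ∫_X λ(y) dy, and a configuration {y₁, …, yₙ}, the scoring function S(Λ, {y₁, …, yₙ}) = −Σ_{i=1}^n log λ(yᵢ) + n log|Λ| + c (|Λ| − n)². Let Φ be a point process on X with intensity measure Λ₀ ∈ M_f (density λ₀) such that E[Φ(X)²] < ∞ and the relevant integrability conditions hold. Then for every Λ ∈ M_f: E[S(Λ, Φ)] ≥ E[S(Λ₀, Φ)], with equality if and only if Λ = Λ₀ (i.e. λ = λ₀ Lebesgue-a.e.). This is the strictly consistent scoring function for the intensity measure obtained by combining the logarithmic score for the normalized intensity with the quadratic Bregman score for the expected total number of points. -/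

import Mathlib

/-!
By Campbell's theorem the expected score depends on the process only through its intensity and
the variance of the number of points `N = Φ(X)`: with `a = ∫_X λ` and `a₀ = ∫_X λ₀`,
`E S(λ, Φ) = -∫_X λ₀ log λ + a₀ log a + c (a - a₀)² + c Var N`.
By Gibbs' inequality (`log t ≤ t - 1` for the ratio `t` of the normalized densities) the first
two terms exceed their value at `λ = λ₀` by `a₀` times the Kullback–Leibler divergence of the
normalized densities. Hence `E S(λ, Φ) - E S(λ₀, Φ)` is a sum of two nonnegative terms, which
vanish only when the normalized densities and the masses agree.
-/

open MeasureTheory ProbabilityTheory Real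

section Bind

variable {Ω α : Type*} [MeasurableSpace Ω] [MeasurableSpace α] {μ : Measure Ω}
  {Φ : Ω → Measure α}

theorem integrable_integral_of_integrable_bind (hΦ : Measurable Φ) {g : α → ℝ}
    (hg : Integrable g (μ.bind Φ)) : Integrable (fun ω => ∫ x, g x ∂Φ ω) μ := by
  have hcomp := Measure.comp_eq_comp_const_apply (μ := μ) (κ := Kernel.mk Φ hΦ)
  rw [Kernel.coe_mk] at hcomp
  rw [hcomp] at hg
  exact hg.integral_comp

theorem integral_integral_of_integrable_bind (hΦ : Measurable Φ) {g : α → ℝ}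
    (hg : Integrable g (μ.bind Φ)) : ∫ ω, ∫ x, g x ∂Φ ω ∂μ = ∫ x, g x ∂μ.bind Φ := by
  have hcomp := Measure.comp_eq_comp_const_apply (μ := μ) (κ := Kernel.mk Φ hΦ)
  rw [Kernel.coe_mk] at hcomp
  rw [hcomp] at hg ⊢
  exact (Kernel.integral_comp hg).symm

theorem bind_eq_withDensity_of_lintegral_eq {ν : Measure α} {X : Set α}
    (hX : MeasurableSet X) (hΦ : Measurable Φ) (hsupp : ∀ ω, Φ ω Xᶜ = 0) {lam : α → ℝ}
    (hlam : IntegrableOn lam X ν) (hlam0 : ∀ x ∈ X, 0 ≤ lam x)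
    (hΛ : ∀ B, MeasurableSet B → B ⊆ X →
      ∫⁻ ω, Φ ω B ∂μ = ENNReal.ofReal (∫ x in B, lam x ∂ν)) :
    μ.bind Φ = (ν.restrict X).withDensity (fun x => ENNReal.ofReal (lam x)) := by
  ext s hs
  have hsX : ∀ ω, Φ ω s = Φ ω (s ∩ X) := fun ω => by
    have hdiff : Φ ω (s \ X) = 0 := measure_mono_null (fun _ hx => hx.2) (hsupp ω)
    rw [← measure_inter_add_sdiff s hX, hdiff, add_zero]
  rw [Measure.bind_apply hs hΦ.aemeasurable, withDensity_apply _ hs,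
    Measure.restrict_restrict hs]
  simp_rw [hsX]
  rw [hΛ _ (hs.inter hX) Set.inter_subset_right, ofReal_integral_eq_lintegral_ofReal
    (hlam.mono_set Set.inter_subset_right)]
  filter_upwards [ae_restrict_mem (hs.inter hX)] with x hx using hlam0 x hx.2

end Bind

section WithDensityOfReal

variable {α : Type*} [MeasurableSpace α] {ν : Measure α} {lam : α → ℝ}

theorem integrable_withDensity_ofReal_iff (hlam : Measurable lam) (hlam0 : 0 ≤ᵐ[ν] lam)
    {g : α → ℝ} :
    Integrable g (ν.withDensity fun x => ENNReal.ofReal (lam x)) ↔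
      Integrable (fun x => lam x * g x) ν := by
  rw [integrable_withDensity_iff hlam.ennreal_ofReal
    (ae_of_all _ fun _ => ENNReal.ofReal_lt_top)]
  refine integrable_congr ?_
  filter_upwards [hlam0] with x hx
  rw [ENNReal.toReal_ofReal hx, mul_comm]

theorem integral_withDensity_ofReal (hlam : Measurable lam) (hlam0 : 0 ≤ᵐ[ν] lam)
    (g : α → ℝ) :
    ∫ x, g x ∂(ν.withDensity fun x => ENNReal.ofReal (lam x)) = ∫ x, lam x * g x ∂ν := by
  rw [integral_withDensity_eq_integral_toReal_smul hlam.ennreal_ofReal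
    (ae_of_all _ fun _ => ENNReal.ofReal_lt_top)]
  refine integral_congr_ae ?_
  filter_upwards [hlam0] with x hx
  rw [ENNReal.toReal_ofReal hx, smul_eq_mul]

end WithDensityOfReal

section Gibbs

variable {α : Type*} [MeasurableSpace α] {ν : Measure α} {p q : α → ℝ}

theorem integral_pos_of_ae_pos [NeZero ν] {f : α → ℝ} (hf : ∀ᵐ x ∂ν, 0 < f x)
    (hfi : Integrable f ν) : 0 < ∫ x, f x ∂ν := by
  refine (integral_pos_iff_support_of_nonneg_ae (hf.mono fun _ h => h.le) hfi).2 ?_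
  refine pos_iff_ne_zero.2 fun h0 => ?_
  obtain ⟨x, hx0, hxpos⟩ := (((Measure.measure_support_eq_zero_iff ν).1 h0).and hf).exists
  exact hxpos.ne' hx0

/-- `(q x / ∫ q) / (p x / ∫ p)`, the ratio of the normalized densities. -/
noncomputable def normalizedRatio (ν : Measure α) (p q : α → ℝ) (x : α) : ℝ :=
  (∫ y, p y ∂ν) * q x / ((∫ y, q y ∂ν) * p x)

variable [NeZero ν] (hp : ∀ᵐ x ∂ν, 0 < p x) (hq : ∀ᵐ x ∂ν, 0 < q x)
  (hpi : Integrable p ν) (hqi : Integrable q ν)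
include hp hq hpi hqi

theorem ae_normalizedRatio_pos : ∀ᵐ x ∂ν, 0 < normalizedRatio ν p q x := by
  have ha := integral_pos_of_ae_pos hp hpi
  have hb := integral_pos_of_ae_pos hq hqi
  filter_upwards [hp, hq] with x hpx hqx
  unfold normalizedRatio
  positivity

theorem ae_mul_normalizedRatio_sub_one_sub_log_nonneg :
    ∀ᵐ x ∂ν, 0 ≤ p x * (normalizedRatio ν p q x - 1 - log (normalizedRatio ν p q x)) := by
  filter_upwards [hp, ae_normalizedRatio_pos hp hq hpi hqi] with x hpx hrx
  exact mul_nonneg hpx.le (by linarith [log_le_sub_one_of_pos hrx])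

theorem mul_normalizedRatio_sub_one_sub_log_ae_eq :
    ∀ᵐ x ∂ν, p x * (normalizedRatio ν p q x - 1 - log (normalizedRatio ν p q x))
      = (p x * log (p x) - p x * log (q x))
        + ((log (∫ y, q y ∂ν) - log (∫ y, p y ∂ν)) * p x
          + ((∫ y, p y ∂ν) / (∫ y, q y ∂ν) * q x - p x)) := by
  have ha := integral_pos_of_ae_pos hp hpi
  have hb := integral_pos_of_ae_pos hq hqi
  filter_upwards [hp, hq] with x hpx hqx
  rw [normalizedRatio, log_div (by positivity) (by positivity), log_mul ha.ne' hqx.ne',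
    log_mul hb.ne' hpx.ne']
  field_simp
  ring

variable (hpp : Integrable (fun x => p x * log (p x)) ν)
  (hpq : Integrable (fun x => p x * log (q x)) ν)
include hpp hpq

theorem integrable_mul_normalizedRatio_sub_one_sub_log :
    Integrable (fun x => p x * (normalizedRatio ν p q x - 1 - log (normalizedRatio ν p q x)))
      ν := by
  have hexpanded : Integrable (fun x => (p x * log (p x) - p x * log (q x))
      + ((log (∫ y, q y ∂ν) - log (∫ y, p y ∂ν)) * p x
        + ((∫ y, p y ∂ν) / (∫ y, q y ∂ν) * q x - p x))) ν :=
    (hpp.sub hpq).add ((hpi.const_mul _).add ((hqi.const_mul _).sub hpi))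
  exact hexpanded.congr (Filter.EventuallyEq.symm
    (mul_normalizedRatio_sub_one_sub_log_ae_eq hp hq hpi hqi))

theorem integral_mul_normalizedRatio_sub_one_sub_log :
    ∫ x, p x * (normalizedRatio ν p q x - 1 - log (normalizedRatio ν p q x)) ∂ν
      = ((∫ x, p x ∂ν) * log (∫ x, q x ∂ν) - ∫ x, p x * log (q x) ∂ν)
        - ((∫ x, p x ∂ν) * log (∫ x, p x ∂ν) - ∫ x, p x * log (p x) ∂ν) := by
  have hb := integral_pos_of_ae_pos hq hqi
  have hent : Integrable (fun x => p x * log (p x) - p x * log (q x)) ν := hpp.sub hpq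
  have hmass : Integrable (fun x => (∫ y, p y ∂ν) / (∫ y, q y ∂ν) * q x - p x) ν :=
    (hqi.const_mul _).sub hpi
  have hlin : Integrable (fun x => (log (∫ y, q y ∂ν) - log (∫ y, p y ∂ν)) * p x
      + ((∫ y, p y ∂ν) / (∫ y, q y ∂ν) * q x - p x)) ν := (hpi.const_mul _).add hmass
  rw [integral_congr_ae (mul_normalizedRatio_sub_one_sub_log_ae_eq hp hq hpi hqi),
    integral_add hent hlin, integral_sub hpp hpq,
    integral_add (hpi.const_mul _) hmass, integral_sub (hqi.const_mul _) hpi,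
    integral_const_mul, integral_const_mul]
  field_simp
  ring

theorem integral_mul_log_sub_le :
    (∫ x, p x ∂ν) * log (∫ x, p x ∂ν) - ∫ x, p x * log (p x) ∂ν
      ≤ (∫ x, p x ∂ν) * log (∫ x, q x ∂ν) - ∫ x, p x * log (q x) ∂ν := by
  rw [← sub_nonneg, ← integral_mul_normalizedRatio_sub_one_sub_log hp hq hpi hqi hpp hpq]
  exact integral_nonneg_of_ae (ae_mul_normalizedRatio_sub_one_sub_log_nonneg hp hq hpi hqi)

theorem ae_mul_eq_mul_of_integral_mul_log_sub_eq
    (h : (∫ x, p x ∂ν) * log (∫ x, p x ∂ν) - ∫ x, p x * log (p x) ∂ν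
      = (∫ x, p x ∂ν) * log (∫ x, q x ∂ν) - ∫ x, p x * log (q x) ∂ν) :
    ∀ᵐ x ∂ν, (∫ y, q y ∂ν) * p x = (∫ y, p y ∂ν) * q x := by
  have hzero :
      ∫ x, p x * (normalizedRatio ν p q x - 1 - log (normalizedRatio ν p q x)) ∂ν = 0 := by
    rw [integral_mul_normalizedRatio_sub_one_sub_log hp hq hpi hqi hpp hpq, h, sub_self]
  have hb := integral_pos_of_ae_pos hq hqi
  filter_upwards [(integral_eq_zero_iff_of_nonneg_ae
    (ae_mul_normalizedRatio_sub_one_sub_log_nonneg hp hq hpi hqi)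
    (integrable_mul_normalizedRatio_sub_one_sub_log hp hq hpi hqi hpp hpq)).1 hzero, hp,
    ae_normalizedRatio_pos hp hq hpi hqi] with x hFx hpx hrx
  have hr1 : normalizedRatio ν p q x = 1 := by
    by_contra hne
    exact (mul_pos hpx (by linarith [log_lt_sub_one_of_pos hrx hne])).ne' hFx
  rw [normalizedRatio, div_eq_one_iff_eq (by positivity)] at hr1
  linarith

end Gibbs

section Moments

variable {Ω : Type*} [MeasurableSpace Ω] {μ : Measure Ω} {N : Ω → ℝ}

theorem integrable_const_sub_sq [IsFiniteMeasure μ] (hN : Integrable N μ)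
    (hN2 : Integrable (fun ω => N ω ^ 2) μ) (A : ℝ) :
    Integrable (fun ω => (A - N ω) ^ 2) μ :=
  (((integrable_const (A ^ 2)).sub (hN.const_mul (2 * A))).add hN2).congr
    (ae_of_all _ fun ω => by simp only [Pi.add_apply, Pi.sub_apply]; ring)

theorem integral_const_sub_sq [IsProbabilityMeasure μ] (hN : Integrable N μ)
    (hN2 : Integrable (fun ω => N ω ^ 2) μ) (A : ℝ) :
    ∫ ω, (A - N ω) ^ 2 ∂μ
      = (A - ∫ ω, N ω ∂μ) ^ 2 + (∫ ω, N ω ^ 2 ∂μ - (∫ ω, N ω ∂μ) ^ 2) := by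
  have hexpand : ∀ ω, (A - N ω) ^ 2 = (A ^ 2 - 2 * A * N ω) + N ω ^ 2 := fun ω => by ring
  have hlin : Integrable (fun ω => A ^ 2 - 2 * A * N ω) μ :=
    (integrable_const _).sub (hN.const_mul _)
  simp_rw [hexpand]
  rw [integral_add hlin hN2, integral_sub (integrable_const _) (hN.const_mul _),
    integral_const_mul, integral_const]
  simp only [probReal_univ, smul_eq_mul, one_mul]
  ring

end Moments

section Score

variable {α : Type*} [MeasurableSpace α] {ν : Measure α} {c : ℝ} {p q : α → ℝ}

/-- `E[S(q, Φ)]` for a point process `Φ` with intensity density `p` w.r.t. `ν`, less the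
report-independent term `c * Var Φ(X)`. -/
noncomputable def expectedLogQuadraticScore (ν : Measure α) (c : ℝ) (p q : α → ℝ) : ℝ :=
  -(∫ x, p x * log (q x) ∂ν) + (∫ x, p x ∂ν) * log (∫ x, q x ∂ν)
    + c * ((∫ x, q x ∂ν) - ∫ x, p x ∂ν) ^ 2

variable (hp : ∀ᵐ x ∂ν, 0 < p x) (hq : ∀ᵐ x ∂ν, 0 < q x)
  (hpi : Integrable p ν) (hqi : Integrable q ν)
  (hpp : Integrable (fun x => p x * log (p x)) ν)
  (hpq : Integrable (fun x => p x * log (q x)) ν)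
include hp hq hpi hqi hpp hpq

theorem expectedLogQuadraticScore_self_le (hc : 0 ≤ c) :
    expectedLogQuadraticScore ν c p p ≤ expectedLogQuadraticScore ν c p q := by
  rcases eq_zero_or_neZero ν with rfl | _
  · simp [expectedLogQuadraticScore]
  have hgibbs := integral_mul_log_sub_le hp hq hpi hqi hpp hpq
  unfold expectedLogQuadraticScore
  nlinarith [mul_nonneg hc (sq_nonneg ((∫ x, q x ∂ν) - ∫ x, p x ∂ν))]

theorem expectedLogQuadraticScore_eq_self_iff (hc : 0 < c) :
    expectedLogQuadraticScore ν c p q = expectedLogQuadraticScore ν c p p ↔ q =ᵐ[ν] p := by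
  refine ⟨fun heq => ?_, fun hae => ?_⟩
  · rcases eq_zero_or_neZero ν with rfl | _
    · simp [Filter.EventuallyEq]
    have hgibbs := integral_mul_log_sub_le hp hq hpi hqi hpp hpq
    have hsq := mul_nonneg hc.le (sq_nonneg ((∫ x, q x ∂ν) - ∫ x, p x ∂ν))
    unfold expectedLogQuadraticScore at heq
    have hmass : ∫ x, q x ∂ν = ∫ x, p x ∂ν := by
      have : c * ((∫ x, q x ∂ν) - ∫ x, p x ∂ν) ^ 2 = 0 := by linarith
      simpa [hc.ne', sub_eq_zero] using this
    have hprop := ae_mul_eq_mul_of_integral_mul_log_sub_eq hp hq hpi hqi hpp hpq (by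
      rw [hmass] at heq ⊢; linarith)
    filter_upwards [hprop] with x hx
    rw [hmass] at hx
    exact (mul_left_cancel₀ (integral_pos_of_ae_pos hp hpi).ne' hx).symm
  · have hlog : (fun x => p x * log (q x)) =ᵐ[ν] fun x => p x * log (p x) := by
      filter_upwards [hae] with x hx
      rw [hx]
    simp only [expectedLogQuadraticScore, integral_congr_ae hae, integral_congr_ae hlog]

end Score

theorem integral_logQuadraticScore_eq {Ω α : Type*} [MeasurableSpace Ω] [MeasurableSpace α]
    {μ : Measure Ω} [IsProbabilityMeasure μ] {Φ : Ω → Measure α} (hΦ : Measurable Φ)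
    {ν : Measure α} {lam : α → ℝ} (hlam : Measurable lam) (hlam0 : 0 ≤ᵐ[ν] lam)
    (hM : μ.bind Φ = ν.withDensity fun x => ENNReal.ofReal (lam x))
    {N : Ω → ℝ} (hN : Integrable N μ) (hN2 : Integrable (fun ω => N ω ^ 2) μ)
    (hEN : ∫ ω, N ω ∂μ = ∫ x, lam x ∂ν) {r : α → ℝ}
    (hr : Integrable (fun x => lam x * log (r x)) ν) (c : ℝ) :
    ∫ ω, (-(∫ x, log (r x) ∂Φ ω) + N ω * log (∫ x, r x ∂ν)
        + c * ((∫ x, r x ∂ν) - N ω) ^ 2) ∂μ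
      = expectedLogQuadraticScore ν c lam r + c * (∫ ω, N ω ^ 2 ∂μ - (∫ ω, N ω ∂μ) ^ 2) := by
  have hlog : Integrable (fun x => log (r x)) (μ.bind Φ) := by
    rwa [hM, integrable_withDensity_ofReal_iff hlam hlam0]
  have hL := integrable_integral_of_integrable_bind hΦ hlog
  have hEL : ∫ ω, ∫ x, log (r x) ∂Φ ω ∂μ = ∫ x, lam x * log (r x) ∂ν := by
    rw [integral_integral_of_integrable_bind hΦ hlog, hM, integral_withDensity_ofReal hlam hlam0]
  have hlinear : Integrable (fun ω => -(∫ x, log (r x) ∂Φ ω) + N ω * log (∫ x, r x ∂ν)) μ :=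
    hL.fun_neg.add (hN.mul_const _)
  rw [integral_add hlinear ((integrable_const_sub_sq hN hN2 _).const_mul c),
    integral_add hL.fun_neg (hN.mul_const _), integral_neg, integral_mul_const,
    integral_const_mul, integral_const_sub_sq hN hN2, hEL, hEN, expectedLogQuadraticScore]
  ring

theorem log_quadratic_intensity_score_strictly_consistent_general
    (d : ℕ) (X : Set (Fin d → ℝ))
    (hXmeas : MeasurableSet X)
    {Ω : Type*} [MeasurableSpace Ω] (μ : Measure Ω) [IsProbabilityMeasure μ]
    (Φ : Ω → Measure (Fin d → ℝ))
    (hΦmeas : ∀ B : Set (Fin d → ℝ), MeasurableSet B →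
      Measurable fun ω => Φ ω B)
    (hΦsupp : ∀ ω, Φ ω Xᶜ = 0)
    -- the class `D` of density reports
    (D : Set ((Fin d → ℝ) → ℝ))
    (hDmeas : ∀ q ∈ D, Measurable q)
    (hDpos : ∀ q ∈ D, ∀ x ∈ X, 0 < q x)
    (hDint : ∀ q ∈ D, IntegrableOn q X volume)
    -- the true intensity density `lam₀ ∈ D`
    (lam₀ : (Fin d → ℝ) → ℝ) (hlam₀D : lam₀ ∈ D)
    (hΛ₀ : ∀ B : Set (Fin d → ℝ), MeasurableSet B → B ⊆ X →
      ∫⁻ ω, Φ ω B ∂μ = ENNReal.ofReal (∫ x in B, lam₀ x))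
    -- `E[Φ(X)²] < ∞`
    (hsecond : ∫⁻ ω, (Φ ω X) ^ 2 ∂μ < ⊤)
    (c : ℝ) (hc : 0 < c)
    -- the score
    (Sc : ((Fin d → ℝ) → ℝ) → Measure (Fin d → ℝ) → ℝ)
    (hSc : ∀ (q : (Fin d → ℝ) → ℝ) (φ : Measure (Fin d → ℝ)), Sc q φ =
      -(∫ x, Real.log (q x) ∂φ) +
        (φ X).toReal * Real.log (∫ x in X, q x) +
        c * ((∫ x in X, q x) - (φ X).toReal) ^ 2)
    -- the relevant integrability conditions
    (hlog : ∀ q ∈ D,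
      IntegrableOn (fun x => lam₀ x * |Real.log (q x)|) X volume) :
    ∀ q ∈ D,
      (∫ ω, Sc lam₀ (Φ ω) ∂μ ≤ ∫ ω, Sc q (Φ ω) ∂μ) ∧
      (∫ ω, Sc q (Φ ω) ∂μ = ∫ ω, Sc lam₀ (Φ ω) ∂μ ↔
        ∀ᵐ x ∂(volume.restrict X), q x = lam₀ x) := by
  intro q hq
  have hΦ : Measurable Φ := Measure.measurable_of_measurable_coe Φ hΦmeas
  have hpos : ∀ r ∈ D, ∀ᵐ x ∂volume.restrict X, 0 < r x :=
    fun r hr => (ae_restrict_mem hXmeas).mono (hDpos r hr)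
  have hlam₀ : 0 ≤ᵐ[volume.restrict X] lam₀ := (hpos lam₀ hlam₀D).mono fun _ h => h.le
  have hlogint : ∀ r ∈ D, Integrable (fun x => lam₀ x * log (r x)) (volume.restrict X) :=
    fun r hr => (hlog r hr).mono'
      ((hDmeas lam₀ hlam₀D).mul (hDmeas r hr).log).aestronglyMeasurable
      (hlam₀.mono fun x hx => by rw [norm_mul, norm_of_nonneg hx, norm_eq_abs])
  have hM := bind_eq_withDensity_of_lintegral_eq hXmeas hΦ hΦsupp (hDint lam₀ hlam₀D)
    (fun x hx => (hDpos lam₀ hlam₀D x hx).le) hΛ₀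
  have hmean := hΛ₀ X hXmeas subset_rfl
  have hcount := hΦmeas X hXmeas
  have hN : Integrable (fun ω => (Φ ω X).toReal) μ :=
    integrable_toReal_of_lintegral_ne_top hcount.aemeasurable (by simp [hmean])
  have hEN : ∫ ω, (Φ ω X).toReal ∂μ = ∫ x in X, lam₀ x := by
    rw [integral_toReal hcount.aemeasurable (ae_lt_top hcount (by simp [hmean])), hmean,
      ENNReal.toReal_ofReal (integral_nonneg_of_ae hlam₀)]
  have hN2 : Integrable (fun ω => (Φ ω X).toReal ^ 2) μ := by
    simpa [ENNReal.toReal_pow] using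
      integrable_toReal_of_lintegral_ne_top (hcount.pow_const 2).aemeasurable hsecond.ne
  have hE : ∀ r ∈ D, ∫ ω, Sc r (Φ ω) ∂μ
      = expectedLogQuadraticScore (volume.restrict X) c lam₀ r
        + c * (∫ ω, (Φ ω X).toReal ^ 2 ∂μ - (∫ ω, (Φ ω X).toReal ∂μ) ^ 2) := fun r hr => by
    simp_rw [hSc]
    exact integral_logQuadraticScore_eq hΦ (hDmeas lam₀ hlam₀D) hlam₀ hM hN hN2 hEN
      (hlogint r hr) c
  rw [hE q hq, hE lam₀ hlam₀D, add_le_add_iff_right, add_left_inj]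
  exact ⟨expectedLogQuadraticScore_self_le (hpos lam₀ hlam₀D) (hpos q hq) (hDint lam₀ hlam₀D)
      (hDint q hq) (hlogint lam₀ hlam₀D) (hlogint q hq) hc.le,
    expectedLogQuadraticScore_eq_self_iff (hpos lam₀ hlam₀D) (hpos q hq) (hDint lam₀ hlam₀D)
      (hDint q hq) (hlogint lam₀ hlam₀D) (hlogint q hq) hc⟩

/-- **Strictly consistent scoring for the intensity via logarithmic plus
quadratic components.** On a bounded Borel `X ⊆ ℝ^d`, for reports given by
positive Lebesgue densities `q` in a class `D`, the score
`S(Λ, φ) = -Σᵢ log q(yᵢ) + n log|Λ| + c(|Λ| - n)²` (with `n = φ(X)` the number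
of points and `|Λ| = ∫_X q`) is strictly consistent for the intensity measure
of the point process `Φ` with intensity density `lam₀ ∈ D`. -/
theorem log_quadratic_intensity_score_strictly_consistent
    (d : ℕ) (X : Set (Fin d → ℝ))
    (hXbdd : Bornology.IsBounded X) (hXmeas : MeasurableSet X)
    {Ω : Type*} [MeasurableSpace Ω] (μ : Measure Ω) [IsProbabilityMeasure μ]
    (Φ : Ω → Measure (Fin d → ℝ))
    (hΦmeas : ∀ B : Set (Fin d → ℝ), MeasurableSet B →
      Measurable fun ω => Φ ω B)
    (hΦsupp : ∀ ω, Φ ω Xᶜ = 0)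
    -- the class `D` of density reports
    (D : Set ((Fin d → ℝ) → ℝ))
    (hDmeas : ∀ q ∈ D, Measurable q)
    (hDpos : ∀ q ∈ D, ∀ x ∈ X, 0 < q x)
    (hDint : ∀ q ∈ D, IntegrableOn q X volume)
    -- the true intensity density `lam₀ ∈ D`
    (lam₀ : (Fin d → ℝ) → ℝ) (hlam₀D : lam₀ ∈ D)
    (hΛ₀ : ∀ B : Set (Fin d → ℝ), MeasurableSet B → B ⊆ X →
      ∫⁻ ω, Φ ω B ∂μ = ENNReal.ofReal (∫ x in B, lam₀ x))
    -- `E[Φ(X)²] < ∞`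
    (hsecond : ∫⁻ ω, (Φ ω X) ^ 2 ∂μ < ⊤)
    (c : ℝ) (hc : 0 < c)
    -- the score
    (Sc : ((Fin d → ℝ) → ℝ) → Measure (Fin d → ℝ) → ℝ)
    (hSc : ∀ (q : (Fin d → ℝ) → ℝ) (φ : Measure (Fin d → ℝ)), Sc q φ =
      -(∫ x, Real.log (q x) ∂φ) +
        (φ X).toReal * Real.log (∫ x in X, q x) +
        c * ((∫ x in X, q x) - (φ X).toReal) ^ 2)
    -- the relevant integrability conditions
    (hint : ∀ q ∈ D, Integrable (fun ω => Sc q (Φ ω)) μ)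
    (hlog : ∀ q ∈ D,
      IntegrableOn (fun x => lam₀ x * |Real.log (q x)|) X volume) :
    ∀ q ∈ D,
      (∫ ω, Sc lam₀ (Φ ω) ∂μ ≤ ∫ ω, Sc q (Φ ω) ∂μ) ∧
      (∫ ω, Sc q (Φ ω) ∂μ = ∫ ω, Sc lam₀ (Φ ω) ∂μ ↔
        ∀ᵐ x ∂(volume.restrict X), q x = lam₀ x) :=
  log_quadratic_intensity_score_strictly_consistent_general d X hXmeas μ Φ hΦmeas hΦsupp D hDmeas
    hDpos hDint lam₀ hlam₀D hΛ₀ hsecond c hc Sc hSc hlog
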